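/- arXiv:1601.06729 — 2 statements merged into one kernel-verified Lean document; each statement's English description precedes it below -/
import Mathlib

section
/- Let J ∈ ℂ^{2N×2N} be an invertible skew-symmetric matrix (Jᵀ = −J), and let W, W̃ ∈ ℂ^{2N×2N} both be J-symplectic (WᵀJW = J and W̃ᵀJW̃ = J). If rank(W̃ − W) = 1, then there exists a vector u ∈ ℂ^{2N} such that W̃ = (I + uuᵀJ)W, where uᵀ denotes the (non-conjugated) transpose. -/
/-!
Since `det J ≠ 0`, `WᵀJW = J` forces `det W = ±1`, so `S = W̃W⁻¹` is again `J`-symplectic and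
`S - 1 = v wᵀ` has rank one. Expanding `SᵀJS = J` and using `vᵀJv = 0` (skew-symmetry) leaves
`(Jv) wᵀ = w (Jv)ᵀ`; as `Jv ≠ 0`, this gives `w = c • Jv`, hence `S - 1 = -c • vvᵀJ`, and
`u = μ v` with `μ² = -c` works.
-/

open Matrix

namespace Matrix

variable {m n R K : Type*} [Fintype n]

theorem exists_vecMulVec_of_rank_eq_one [Field K] (A : Matrix m n K) (h : A.rank = 1) :
    ∃ v w, v ≠ 0 ∧ A = vecMulVec v w := by
  obtain ⟨v, hv, hspan⟩ := finrank_eq_one_iff'.mp h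
  have hcol : ∀ j, ∃ c : K, c • (v : m → K) = A.col j := fun j => by
    classical
    obtain ⟨c, hc⟩ := hspan ⟨A *ᵥ Pi.single j 1, Pi.single j 1, rfl⟩
    exact ⟨c, by simpa [mulVec_single_one] using congrArg Subtype.val hc⟩
  choose c hc using hcol
  refine ⟨v, c, fun h0 => hv (Subtype.ext h0), ?_⟩
  ext i j
  simpa [vecMulVec_apply, mul_comm] using (congrFun (hc j) i).symm

omit [Fintype n] in
theorem exists_eq_smul_of_vecMulVec_comm [Field K] {a b : n → K} (ha : a ≠ 0)
    (h : vecMulVec a b = vecMulVec b a) : ∃ c : K, b = c • a := by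
  obtain ⟨j, hj⟩ := Function.ne_iff.mp ha
  refine ⟨b j / a j, funext fun i => ?_⟩
  have hij := congrFun (congrFun h i) j
  simp only [vecMulVec_apply] at hij
  rw [Pi.smul_apply, smul_eq_mul, div_mul_eq_mul_div, eq_div_iff hj]
  linear_combination -hij

theorem vecMul_eq_neg_mulVec [CommRing R] {J : Matrix n n R} (hJ : Jᵀ = -J) (v : n → R) :
    v ᵥ* J = -(J *ᵥ v) := by
  rw [← mulVec_transpose, hJ, neg_mulVec]

theorem dotProduct_mulVec_self_eq_zero [CommRing R] [NoZeroDivisors R] [CharZero R]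
    {J : Matrix n n R} (hJ : Jᵀ = -J) (v : n → R) : v ⬝ᵥ (J *ᵥ v) = 0 := by
  refine CharZero.eq_neg_self_iff.mp ?_
  calc v ⬝ᵥ (J *ᵥ v) = (Jᵀ *ᵥ v) ⬝ᵥ v := by rw [dotProduct_mulVec, mulVec_transpose]
    _ = -(v ⬝ᵥ (J *ᵥ v)) := by rw [hJ, neg_mulVec, neg_dotProduct, dotProduct_comm]

variable [DecidableEq n]

theorem isUnit_of_transpose_mul_mul_self_eq [CommRing R] {J W : Matrix n n R} (hJ : IsUnit J)
    (hW : Wᵀ * J * W = J) : IsUnit W := by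
  have hdet : W.det * W.det * J.det = 1 * J.det := by
    have := congrArg det hW
    rw [det_mul, det_mul, det_transpose] at this
    linear_combination this
  rw [isUnit_iff_isUnit_det]
  exact .of_mul_eq_one _ (((isUnit_iff_isUnit_det J).mp hJ).mul_right_cancel hdet)

theorem transpose_mul_mul_self_eq_of_mul_right [CommRing R] {J S W : Matrix n n R}
    (hWu : IsUnit W) (hW : Wᵀ * J * W = J) (hSW : (S * W)ᵀ * J * (S * W) = J) :
    Sᵀ * J * S = J := by
  have h : Wᵀ * (Sᵀ * J * S) * W = Wᵀ * J * W := by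
    calc Wᵀ * (Sᵀ * J * S) * W = (S * W)ᵀ * J * (S * W) := by
          rw [transpose_mul]; noncomm_ring
      _ = Wᵀ * J * W := by rw [hSW, hW]
  exact (W.isUnit_transpose.mpr hWu).mul_left_cancel (hWu.mul_right_cancel h)

theorem vecMulVec_comm_of_transpose_mul_mul_eq [CommRing R] [NoZeroDivisors R] [CharZero R]
    {J : Matrix n n R} (hJ : Jᵀ = -J) {v w : n → R}
    (h : (1 + vecMulVec v w)ᵀ * J * (1 + vecMulVec v w) = J) :
    vecMulVec (J *ᵥ v) w = vecMulVec w (J *ᵥ v) := by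
  have hKJ : (vecMulVec v w)ᵀ * J = -vecMulVec w (J *ᵥ v) := by
    rw [transpose_vecMulVec, vecMulVec_mul, vecMul_eq_neg_mulVec hJ, vecMulVec_neg]
  have hKJK : (vecMulVec v w)ᵀ * J * vecMulVec v w = 0 := by
    rw [transpose_vecMulVec, vecMulVec_mul, vecMulVec_mul_vecMulVec, ← dotProduct_mulVec,
      dotProduct_mulVec_self_eq_zero hJ, zero_smul, vecMulVec_zero]
  have hexpand : (1 + vecMulVec v w)ᵀ * J * (1 + vecMulVec v w) = J + (vecMulVec v w)ᵀ * J
      + J * vecMulVec v w + (vecMulVec v w)ᵀ * J * vecMulVec v w := by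
    rw [transpose_add, transpose_one]; noncomm_ring
  rw [hexpand, hKJK, hKJ, mul_vecMulVec, add_zero, add_assoc, add_eq_left,
    neg_add_eq_zero] at h
  exact h.symm

theorem exists_eq_one_add_vecMulVec_self_mul_of_rank_eq_one [Field K] [IsAlgClosed K]
    [CharZero K] {J S : Matrix n n K} (hJ : IsUnit J) (hJskew : Jᵀ = -J)
    (hS : Sᵀ * J * S = J) (hrank : (S - 1).rank = 1) :
    ∃ u, S = 1 + vecMulVec u u * J := by
  obtain ⟨v, w, hv, hvw⟩ := exists_vecMulVec_of_rank_eq_one (S - 1) hrank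
  rw [sub_eq_iff_eq_add'] at hvw
  subst hvw
  have hJv : J *ᵥ v ≠ 0 := by
    simpa using (mulVec_injective_iff_isUnit.mpr hJ).ne hv
  obtain ⟨c, rfl⟩ :=
    exists_eq_smul_of_vecMulVec_comm hJv (vecMulVec_comm_of_transpose_mul_mul_eq hJskew hS)
  obtain ⟨μ, hμ⟩ := IsAlgClosed.exists_pow_nat_eq (-c) two_pos
  refine ⟨μ • v, ?_⟩
  rw [vecMulVec_mul, smul_vecMul, vecMul_eq_neg_mulVec hJskew, smul_vecMulVec, vecMulVec_smul,
    vecMulVec_smul, vecMulVec_neg, smul_smul, ← sq, hμ, neg_smul, smul_neg, neg_neg]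

end Matrix

theorem rankOne_difference_of_symplectic_general (N : ℕ)
    (J W W' : Matrix (Fin (2 * N)) (Fin (2 * N)) ℂ)
    (hJinv : IsUnit J) (hJskew : Jᵀ = -J)
    (hW : Wᵀ * J * W = J) (hW' : W'ᵀ * J * W' = J)
    (hrank : (W' - W).rank = 1) :
    ∃ u : Fin (2 * N) → ℂ, W' = (1 + vecMulVec u u * J) * W := by
  have hWu : IsUnit W := isUnit_of_transpose_mul_mul_self_eq hJinv hW
  have hWdet : IsUnit W.det := (isUnit_iff_isUnit_det W).mp hWu
  have hW'eq : W' = W' * W⁻¹ * W := (nonsing_inv_mul_cancel_right _ _ hWdet).symm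
  have hS : (W' * W⁻¹)ᵀ * J * (W' * W⁻¹) = J :=
    transpose_mul_mul_self_eq_of_mul_right hWu hW (by rwa [← hW'eq])
  have hrankS : (W' * W⁻¹ - 1).rank = 1 := by
    rwa [← rank_mul_eq_left_of_isUnit_det W _ hWdet, sub_mul, ← hW'eq, one_mul]
  obtain ⟨u, hu⟩ := exists_eq_one_add_vecMulVec_self_mul_of_rank_eq_one hJinv hJskew hS hrankS
  exact ⟨u, hu ▸ hW'eq⟩

/-- **Lemma, after Mehl et al..** Let `J ∈ ℂ^{2N×2N}` be invertible and
skew-symmetric, and let `W, W'` both be `J`-symplectic (with respect to the non-conjugated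
transpose).  If `rank(W' − W) = 1`, then `W' = (I + uuᵀJ)W` for some vector `u ∈ ℂ^{2N}`. -/
theorem rankOne_difference_of_symplectic (N : ℕ) (hN : 0 < N)
    (J W W' : Matrix (Fin (2 * N)) (Fin (2 * N)) ℂ)
    (hJinv : IsUnit J) (hJskew : Jᵀ = -J)
    (hW : Wᵀ * J * W = J) (hW' : W'ᵀ * J * W' = J)
    (hrank : (W' - W).rank = 1) :
    ∃ u : Fin (2 * N) → ℂ, W' = (1 + vecMulVec u u * J) * W :=
  rankOne_difference_of_symplectic_general N J W W' hJinv hJskew hW hW' hrank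
end

section
/- Let J ∈ ℝ^{2N×2N} be an invertible skew-symmetric matrix, let H : ℝ → ℝ^{2N×2N} be a function with H(t)ᵀ = H(t) for all t, and let X : ℝ → ℝ^{2N×2N} be differentiable and satisfy J·X′(t) = H(t)·X(t) for all t. Fix u ∈ ℝ^{2N} and define E(t) = (JuuᵀH(t))ᵀ + JuuᵀH(t) + (uuᵀJ)ᵀH(t)(uuᵀJ). Then X̃(t) = (I + uuᵀJ)·X(t) is differentiable and satisfies J·X̃′(t) = (H(t) + E(t))·X̃(t) for all t. -/
/-!
With `V = uuᵀ` and `S = I + VJ`, skew-symmetry of `J` gives `uᵀJu = 0`, hence `VJV = 0` and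
`S⁻¹ = I - VJ`. The perturbed coefficient factors as `H + E = Sᵀ⁻¹ H S⁻¹` with `Sᵀ⁻¹ = I + JV`,
and `J S = Sᵀ⁻¹ J`. Hence `J (S X)′ = Sᵀ⁻¹ J X′ = Sᵀ⁻¹ H X = (H + E) (S X)`.
-/

open Matrix

/-- The perturbation matrix `E = (JuuᵀH)ᵀ + JuuᵀH + (uuᵀJ)ᵀH(uuᵀJ)` associated with a
coefficient matrix `H`, a skew-symmetric matrix `J` and a vector `u`. -/
def pertMatrix {n : ℕ} (J : Matrix (Fin n) (Fin n) ℝ) (u : Fin n → ℝ)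
    (H : Matrix (Fin n) (Fin n) ℝ) : Matrix (Fin n) (Fin n) ℝ :=
  (J * vecMulVec u u * H)ᵀ + J * vecMulVec u u * H +
    (vecMulVec u u * J)ᵀ * H * (vecMulVec u u * J)

namespace Matrix

variable {n R : Type*} [Fintype n] [CommRing R] [NoZeroDivisors R] [CharZero R]
  {J : Matrix n n R}

theorem dotProduct_mulVec_self_eq_zero_of_transpose_eq_neg (hJ : Jᵀ = -J) (u : n → R) :
    u ⬝ᵥ J *ᵥ u = 0 := by
  rw [← CharZero.eq_neg_self_iff]
  conv_lhs => rw [dotProduct_mulVec, ← mulVec_transpose, hJ, neg_mulVec, neg_dotProduct,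
    dotProduct_comm]

theorem vecMulVec_mul_mul_vecMulVec_self_of_transpose_eq_neg (hJ : Jᵀ = -J) (u : n → R) :
    vecMulVec u u * J * vecMulVec u u = 0 := by
  rw [vecMulVec_mul, vecMulVec_mul_vecMulVec, ← dotProduct_mulVec,
    dotProduct_mulVec_self_eq_zero_of_transpose_eq_neg hJ, zero_smul]
  ext i j
  simp

theorem one_sub_vecMulVec_mul_mul_one_add_vecMulVec_mul [DecidableEq n] (hJ : Jᵀ = -J)
    (u : n → R) : (1 - vecMulVec u u * J) * (1 + vecMulVec u u * J) = 1 := by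
  calc (1 - vecMulVec u u * J) * (1 + vecMulVec u u * J)
      = 1 - vecMulVec u u * J * vecMulVec u u * J := by noncomm_ring
    _ = 1 := by
      rw [vecMulVec_mul_mul_vecMulVec_self_of_transpose_eq_neg hJ, Matrix.zero_mul, sub_zero]

end Matrix

theorem HasDerivAt.const_matrix_mul_apply {m n p 𝕜 : Type*} [Fintype n]
    [NontriviallyNormedField 𝕜]
    (A : Matrix m n 𝕜) {X : 𝕜 → Matrix n p 𝕜} {X' : Matrix n p 𝕜} {t : 𝕜}
    (hX : ∀ i j, HasDerivAt (fun s => X s i j) (X' i j) t) (i : m) (j : p) :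
    HasDerivAt (fun s => (A * X s) i j) ((A * X') i j) t := by
  simp only [mul_apply]
  exact HasDerivAt.fun_sum fun k _ => (hX k j).const_mul (A i k)

theorem add_pertMatrix_eq {n : ℕ} {J H : Matrix (Fin n) (Fin n) ℝ} (hJ : Jᵀ = -J) (hH : Hᵀ = H)
    (u : Fin n → ℝ) :
    H + pertMatrix J u H = (1 + J * vecMulVec u u) * H * (1 - vecMulVec u u * J) := by
  simp only [pertMatrix, transpose_mul, transpose_vecMulVec, hJ, hH]
  noncomm_ring

theorem rankOnePerturbation_solves_perturbed_system_general (N : ℕ)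
    (J : Matrix (Fin (2 * N)) (Fin (2 * N)) ℝ)
    (hJskew : Jᵀ = -J)
    (H X X' : ℝ → Matrix (Fin (2 * N)) (Fin (2 * N)) ℝ)
    (hH : ∀ t, (H t)ᵀ = H t)
    (hX : ∀ t i j, HasDerivAt (fun s => X s i j) (X' t i j) t)
    (hsys : ∀ t, J * X' t = H t * X t)
    (u : Fin (2 * N) → ℝ) :
    ∀ t : ℝ, ∃ Y : Matrix (Fin (2 * N)) (Fin (2 * N)) ℝ,
      (∀ i j, HasDerivAt (fun s => ((1 + vecMulVec u u * J) * X s) i j) (Y i j) t) ∧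
      J * Y = (H t + pertMatrix J u (H t)) * ((1 + vecMulVec u u * J) * X t) := by
  intro t
  refine ⟨(1 + vecMulVec u u * J) * X' t,
    HasDerivAt.const_matrix_mul_apply (1 + vecMulVec u u * J) (hX t), ?_⟩
  calc J * ((1 + vecMulVec u u * J) * X' t) = (1 + J * vecMulVec u u) * (J * X' t) := by
        noncomm_ring
    _ = (1 + J * vecMulVec u u) * H t *
          ((1 - vecMulVec u u * J) * (1 + vecMulVec u u * J)) * X t := by
      rw [hsys, one_sub_vecMulVec_mul_mul_one_add_vecMulVec_mul hJskew, Matrix.mul_one,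
        Matrix.mul_assoc]
    _ = (H t + pertMatrix J u (H t)) * ((1 + vecMulVec u u * J) * X t) := by
      rw [add_pertMatrix_eq hJskew (hH t)]
      simp only [Matrix.mul_assoc]

/-- **Proposition 3.** If `X` is a differentiable solution of the Hamiltonian
system `J·X′(t) = H(t)·X(t)` (with `J` invertible skew-symmetric and `H(t)` symmetric), then
for every `u ∈ ℝ^{2N}` the rank one perturbation `X̃(t) = (I + uuᵀJ)·X(t)` is differentiable
and solves the perturbed system `J·X̃′(t) = (H(t) + E(t))·X̃(t)`, where
`E(t) = (JuuᵀH(t))ᵀ + JuuᵀH(t) + (uuᵀJ)ᵀH(t)(uuᵀJ)`.  Differentiability is expressed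
entrywise. -/
theorem rankOnePerturbation_solves_perturbed_system (N : ℕ) (hN : 0 < N)
    (J : Matrix (Fin (2 * N)) (Fin (2 * N)) ℝ)
    (hJinv : IsUnit J) (hJskew : Jᵀ = -J)
    (H X X' : ℝ → Matrix (Fin (2 * N)) (Fin (2 * N)) ℝ)
    (hH : ∀ t, (H t)ᵀ = H t)
    (hX : ∀ t i j, HasDerivAt (fun s => X s i j) (X' t i j) t)
    (hsys : ∀ t, J * X' t = H t * X t)
    (u : Fin (2 * N) → ℝ) :
    ∀ t : ℝ, ∃ Y : Matrix (Fin (2 * N)) (Fin (2 * N)) ℝ,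
      (∀ i j, HasDerivAt (fun s => ((1 + vecMulVec u u * J) * X s) i j) (Y i j) t) ∧
      J * Y = (H t + pertMatrix J u (H t)) * ((1 + vecMulVec u u * J) * X t) :=
  rankOnePerturbation_solves_perturbed_system_general N J hJskew H X X' hH hX hsys u
end
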